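/- Let N ≥ 2, α ∈ (0,1), β ∈ (α,1), and let u : ℝ^{N-1} → ℝ be of class C^{1,β} with inf u > 0. Then for every s ∈ ℝ^{N-1}, the functions t ↦ (u(s)−u(s−t)−t·∇u(s−t)) / (|t|² + (u(s)−u(s−t))²)^{(N+α)/2} and t ↦ (u(s)+u(s−t)+t·∇u(s−t)) / (|t|² + (u(s)+u(s−t))²)^{(N+α)/2} are Lebesgue integrable on ℝ^{N-1}. -/

import Mathlib

/-!
Both denominators are at least `‖t‖ ^ (N + α)`. Near `t = 0`, the mean value inequality with a
`β`-Hölder gradient makes the first numerator `O(‖t‖ ^ (1 + β))`, so the first integrand is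
`O(‖t‖ ^ (-(N - 1) + (β - α)))`, integrable near the origin of `ℝ^{N-1}` because `β > α`; the second
denominator is at least `(2 inf u) ^ (N + α)`, so the second integrand is bounded there. For
`‖t‖ ≥ 1` both numerators are `O(‖t‖)`, so both integrands are `O(‖t‖ ^ (-(N - 1) - α))`,
integrable at infinity because `α > 0`.
-/

open MeasureTheory Real Filter Topology

noncomputable section

abbrev ES (m : ℕ) : Type := EuclideanSpace ℝ (Fin (m + 1))

/-- `u` is of class `C^{1,β}` : bounded, continuously differentiable with bounded
gradient, and with `β`-Hölder continuous gradient. -/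
def IsC1Beta {n : ℕ} (β : ℝ) (u : EuclideanSpace ℝ (Fin n) → ℝ) : Prop :=
  ContDiff ℝ 1 u ∧ (∃ C, ∀ x, |u x| ≤ C) ∧ (∃ C, ∀ x, ‖fderiv ℝ u x‖ ≤ C) ∧
    (∃ C, ∀ x y, ‖fderiv ℝ u x - fderiv ℝ u y‖ ≤ C * ‖x - y‖ ^ β)

open Set Module Metric

section RadialBounds

variable {E F : Type*} [NormedAddCommGroup E] [NormedSpace ℝ E] [FiniteDimensional ℝ E]
  [MeasurableSpace E] [BorelSpace E] [NormedAddCommGroup F] {μ : Measure E} [μ.IsAddHaarMeasure]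

theorem integrableOn_compl_ball_of_norm_le_rpow {f : E → F} {C b r : ℝ}
    (hb : finrank ℝ E < b) (hr : 0 < r) (h_decay : ∀ x, r ≤ ‖x‖ → ‖f x‖ ≤ C * ‖x‖ ^ (-b))
    (h_meas : AEStronglyMeasurable f μ) :
    IntegrableOn f (ball 0 r)ᶜ μ := by
  set c := r / (1 + r)
  have hc : 0 < c := by positivity
  refine Integrable.mono' (((integrable_one_add_norm hb).const_mul (C * c ^ (-b))).integrableOn)
    h_meas.restrict ?_
  filter_upwards [ae_restrict_mem measurableSet_ball.compl] with x hx
  have hrx : r ≤ ‖x‖ := by simpa using hx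
  have hx0 : 0 < ‖x‖ := hr.trans_le hrx
  have hC : 0 ≤ C :=
    nonneg_of_mul_nonneg_left ((norm_nonneg _).trans (h_decay x hrx)) (by positivity)
  -- `c` is the largest constant with `c * (1 + ‖x‖) ≤ ‖x‖` for all `‖x‖ ≥ r`
  have hcx : c * (1 + ‖x‖) ≤ ‖x‖ := by
    rw [div_mul_eq_mul_div, div_le_iff₀ (by positivity)]
    nlinarith
  calc ‖f x‖ ≤ C * ‖x‖ ^ (-b) := h_decay x hrx
    _ ≤ C * (c * (1 + ‖x‖)) ^ (-b) := by
      have hb0 : 0 ≤ b := (Nat.cast_nonneg _).trans hb.le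
      gcongr ?_ * ?_
      exact rpow_le_rpow_of_nonpos (by positivity) hcx (neg_nonpos.2 hb0)
    _ = C * c ^ (-b) * (1 + ‖x‖) ^ (-b) := by
      rw [mul_rpow hc.le (by positivity), mul_assoc]

theorem integrable_of_norm_le_rpow_of_norm_le_rpow [Nontrivial E] {f : E → F} {C₀ C₁ a b : ℝ}
    (ha : a < finrank ℝ E) (hb : finrank ℝ E < b)
    (h_zero : ∀ x, x ≠ 0 → ‖x‖ < 1 → ‖f x‖ ≤ C₀ * ‖x‖ ^ (-a))
    (h_infty : ∀ x, 1 ≤ ‖x‖ → ‖f x‖ ≤ C₁ * ‖x‖ ^ (-b)) (h_meas : AEStronglyMeasurable f μ) :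
    Integrable f μ := by
  rw [← integrableOn_univ, ← union_compl_self (ball (0 : E) 1)]
  refine (integrableOn_ball_of_norm_le_rpow (C := C₀) finrank_pos ha ?_ h_meas).union
    (integrableOn_compl_ball_of_norm_le_rpow hb one_pos h_infty h_meas)
  filter_upwards [ae_restrict_of_ae (μ.ae_ne 0), ae_restrict_mem measurableSet_ball]
    with x hx0 hx1
  exact h_zero x hx0 (mem_ball_zero_iff.mp hx1)

end RadialBounds

theorem norm_sub_sub_fderiv_le_of_holder {E F : Type*} [NormedAddCommGroup E] [NormedSpace ℝ E]
    [NormedAddCommGroup F] [NormedSpace ℝ F] {u : E → F} {C β : ℝ} (hu : Differentiable ℝ u)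
    (hβ : 0 ≤ β) (hHol : ∀ x y, ‖fderiv ℝ u x - fderiv ℝ u y‖ ≤ C * ‖x - y‖ ^ β) (x y : E) :
    ‖u y - u x - fderiv ℝ u x (y - x)‖ ≤ C * ‖y - x‖ ^ β * ‖y - x‖ := by
  rcases eq_or_ne y x with rfl | hyx
  · simp
  have hC : 0 ≤ C := nonneg_of_mul_nonneg_left ((norm_nonneg _).trans (hHol y x))
    (rpow_pos_of_pos (norm_pos_iff.2 (sub_ne_zero.2 hyx)) β)
  refine (convex_segment x y).norm_image_sub_le_of_norm_fderiv_le' (fun z _ => hu z)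
    (fun z hz => ?_) (left_mem_segment ℝ x y) (right_mem_segment ℝ x y)
  grw [hHol, norm_sub_le_of_mem_segment hz]

theorem abs_div_rpow_sq_add_sq_le {a x w p : ℝ} (hx : 0 < x) (hp : 0 ≤ p) :
    |a / (x ^ 2 + w ^ 2) ^ p| ≤ |a| / x ^ (2 * p) := by
  have hden : x ^ (2 * p) ≤ (x ^ 2 + w ^ 2) ^ p := by
    rw [rpow_mul hx.le, rpow_two]
    gcongr
    exact le_add_of_nonneg_right (sq_nonneg w)
  rw [abs_div, abs_of_nonneg (a := (x ^ 2 + w ^ 2) ^ p) (by positivity)]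
  gcongr

theorem abs_div_rpow_sq_add_sq_le_rpow {a x w p K₀ K₁ : ℝ} (hx : 1 ≤ x) (hp : 0 ≤ p)
    (hK₀ : 0 ≤ K₀) (ha : |a| ≤ K₀ + K₁ * x) :
    |a / (x ^ 2 + w ^ 2) ^ p| ≤ (K₀ + K₁) * x ^ (-(2 * p - 1)) := by
  have hx0 : 0 < x := one_pos.trans_le hx
  calc |a / (x ^ 2 + w ^ 2) ^ p| ≤ |a| / x ^ (2 * p) := abs_div_rpow_sq_add_sq_le hx0 hp
    _ ≤ (K₀ + K₁) * x / x ^ (2 * p) := by gcongr; nlinarith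
    _ = (K₀ + K₁) * x ^ (-(2 * p - 1)) := by
      rw [mul_div_assoc, neg_sub, rpow_sub hx0, rpow_one]

section BoundedGradient

variable {E : Type*} [NormedAddCommGroup E] [NormedSpace ℝ E] {u : E → ℝ} {Cu Cd : ℝ}

theorem abs_sub_sub_fderiv_le (hCu : ∀ x, |u x| ≤ Cu) (hCd : ∀ x, ‖fderiv ℝ u x‖ ≤ Cd)
    (x y t : E) : |u x - u y - fderiv ℝ u y t| ≤ 2 * Cu + Cd * ‖t‖ := by
  have hDu := (fderiv ℝ u y).le_of_opNorm_le (hCd y) t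
  rw [Real.norm_eq_abs] at hDu
  linarith [abs_sub (u x - u y) (fderiv ℝ u y t), abs_sub (u x) (u y), hCu x, hCu y]

theorem abs_add_add_fderiv_le (hCu : ∀ x, |u x| ≤ Cu) (hCd : ∀ x, ‖fderiv ℝ u x‖ ≤ Cd)
    (x y t : E) : |u x + u y + fderiv ℝ u y t| ≤ 2 * Cu + Cd * ‖t‖ := by
  have hDu := (fderiv ℝ u y).le_of_opNorm_le (hCd y) t
  rw [Real.norm_eq_abs] at hDu
  linarith [abs_add_three (u x) (u y) (fderiv ℝ u y t), hCu x, hCu y]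

end BoundedGradient

section Integrands

variable {E : Type*} [NormedAddCommGroup E] [NormedSpace ℝ E] [FiniteDimensional ℝ E]
  [Nontrivial E] [MeasurableSpace E] [BorelSpace E] {μ : Measure E} [μ.IsAddHaarMeasure]
  {u : E → ℝ} {Cu Cd p : ℝ}

theorem integrable_sub_sub_fderiv_div_rpow {C β : ℝ} (hu : ContDiff ℝ 1 u)
    (hCu : ∀ x, |u x| ≤ Cu) (hCd : ∀ x, ‖fderiv ℝ u x‖ ≤ Cd) (hβ : 0 ≤ β)
    (hHol : ∀ x y, ‖fderiv ℝ u x - fderiv ℝ u y‖ ≤ C * ‖x - y‖ ^ β)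
    (hp_zero : 2 * p - 1 - β < finrank ℝ E) (hp_infty : finrank ℝ E < 2 * p - 1) (s : E) :
    Integrable (fun t => (u s - u (s - t) - fderiv ℝ u (s - t) t) /
      (‖t‖ ^ 2 + (u s - u (s - t)) ^ 2) ^ p) μ := by
  have hp : 0 ≤ p := by linarith [(finrank ℝ E).cast_nonneg (α := ℝ)]
  have hCu0 : 0 ≤ Cu := (abs_nonneg _).trans (hCu s)
  refine integrable_of_norm_le_rpow_of_norm_le_rpow (C₀ := C) (C₁ := 2 * Cu + Cd) hp_zero hp_infty
    (fun t ht _ => ?_) (fun t ht => ?_) ?_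
  · have ht0 : 0 < ‖t‖ := norm_pos_iff.2 ht
    have hTaylor := norm_sub_sub_fderiv_le_of_holder (hu.differentiable one_ne_zero) hβ hHol
      (s - t) s
    rw [sub_sub_cancel, Real.norm_eq_abs] at hTaylor
    rw [Real.norm_eq_abs]
    calc _ ≤ |u s - u (s - t) - fderiv ℝ u (s - t) t| / ‖t‖ ^ (2 * p) :=
          abs_div_rpow_sq_add_sq_le ht0 hp
      _ ≤ C * ‖t‖ ^ β * ‖t‖ / ‖t‖ ^ (2 * p) := by gcongr
      _ = C * ‖t‖ ^ (-(2 * p - 1 - β)) := by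
        rw [mul_assoc, mul_div_assoc, ← rpow_add_one ht0.ne', ← rpow_sub ht0]
        ring_nf
  · rw [Real.norm_eq_abs]
    exact abs_div_rpow_sq_add_sq_le_rpow ht hp (by linarith)
      (abs_sub_sub_fderiv_le hCu hCd s (s - t) t)
  · have hu_cont := hu.continuous
    have hu'_cont := hu.continuous_fderiv one_ne_zero
    exact Measurable.aestronglyMeasurable (by fun_prop)

theorem integrable_add_add_fderiv_div_rpow {δ : ℝ} (hu : ContDiff ℝ 1 u)
    (hCu : ∀ x, |u x| ≤ Cu) (hCd : ∀ x, ‖fderiv ℝ u x‖ ≤ Cd) (hδ : 0 < δ) (hδu : ∀ x, δ ≤ u x)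
    (hp_infty : finrank ℝ E < 2 * p - 1) (s : E) :
    Integrable (fun t => (u s + u (s - t) + fderiv ℝ u (s - t) t) /
      (‖t‖ ^ 2 + (u s + u (s - t)) ^ 2) ^ p) μ := by
  have hp : 0 ≤ p := by linarith [(finrank ℝ E).cast_nonneg (α := ℝ)]
  have hCu0 : 0 ≤ Cu := (abs_nonneg _).trans (hCu s)
  have hCd0 : 0 ≤ Cd := (norm_nonneg _).trans (hCd s)
  refine integrable_of_norm_le_rpow_of_norm_le_rpow
    (C₀ := (2 * Cu + Cd) / (2 * δ) ^ (2 * p)) (C₁ := 2 * Cu + Cd) (a := 0)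
    (Nat.cast_pos.2 finrank_pos) hp_infty
    (fun t _ ht => ?_) (fun t ht => ?_) ?_
  · have hden : 2 * δ ≤ u s + u (s - t) := by linarith [hδu s, hδu (s - t)]
    have hnum := abs_add_add_fderiv_le hCu hCd s (s - t) t
    rw [Real.norm_eq_abs, neg_zero, rpow_zero, mul_one, add_comm (‖t‖ ^ 2)]
    calc _ ≤ |u s + u (s - t) + fderiv ℝ u (s - t) t| / (u s + u (s - t)) ^ (2 * p) :=
          abs_div_rpow_sq_add_sq_le (by linarith) hp
      _ ≤ (2 * Cu + Cd) / (2 * δ) ^ (2 * p) := by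
        gcongr
        nlinarith
  · rw [Real.norm_eq_abs]
    exact abs_div_rpow_sq_add_sq_le_rpow ht hp (by linarith)
      (abs_add_add_fderiv_le hCu hCd s (s - t) t)
  · have hu_cont := hu.continuous
    have hu'_cont := hu.continuous_fderiv one_ne_zero
    exact Measurable.aestronglyMeasurable (by fun_prop)

end Integrands

theorem statement_1 (m : ℕ) (α β : ℝ) (hα : α ∈ Set.Ioo (0 : ℝ) 1)
    (hβ : β ∈ Set.Ioo α 1) (u : ES m → ℝ) (hu : IsC1Beta β u)
    (hpos : ∃ δ > 0, ∀ x, δ ≤ u x) (s : ES m) :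
    Integrable (fun t : ES m => (u s - u (s - t) - fderiv ℝ u (s - t) t) /
        (‖t‖ ^ 2 + (u s - u (s - t)) ^ 2) ^ (((m : ℝ) + 2 + α) / 2)) ∧
      Integrable (fun t : ES m => (u s + u (s - t) + fderiv ℝ u (s - t) t) /
        (‖t‖ ^ 2 + (u s + u (s - t)) ^ 2) ^ (((m : ℝ) + 2 + α) / 2)) := by
  obtain ⟨hu, ⟨Cu, hCu⟩, ⟨Cd, hCd⟩, ⟨C, hHol⟩⟩ := hu
  obtain ⟨δ, hδ, hδu⟩ := hpos
  have hdim : (finrank ℝ (ES m) : ℝ) = m + 1 := by simp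
  have hp_zero : 2 * (((m : ℝ) + 2 + α) / 2) - 1 - β < finrank ℝ (ES m) := by
    rw [hdim]; linarith [hβ.1]
  have hp_infty : (finrank ℝ (ES m) : ℝ) < 2 * (((m : ℝ) + 2 + α) / 2) - 1 := by
    rw [hdim]; linarith [hα.1]
  exact ⟨integrable_sub_sub_fderiv_div_rpow hu hCu hCd (hα.1.trans hβ.1).le hHol hp_zero
      hp_infty s,
    integrable_add_add_fderiv_div_rpow hu hCu hCd hδ hδu hp_infty s⟩
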